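/- Let 𝒫 be a family of distributions P for (Y, Z), where Y ∈ {0,1}^n and Z is a latent variable, such that: (i) for P-almost all values of Z, the total preorder on {1,...,n} induced by the conditional mean vector E_P[Y | Z] coincides with the one induced by E_P[α(Y) | Z], and (ii) this common preorder is the same for almost all Z. Then the AUC is a strictly R*-proper scoring function for (the marginal distributions of Y under) 𝒫: for every P ∈ 𝒫 and every total preorder ≾, E_P[AUC(Y, ≾)] ≤ E_P[AUC(Y, t)] for all t ∈ R*(P), with equality if and only if ≾ ∈ R*(P). -/

import Mathlib

/-!
Writing `a = E_P[α(Y)]`, linearity gives `E_P[AUC(Y, ≾)] = 1/2 + 1/2 · Σ_i a_i ρ_i(≾)`, and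
`Σ_i a_i ρ_i(≾) = Σ_{j ≾ i} (a_i - a_j) ≤ Σ_{i,j} (a_i - a_j)⁺`, with equality exactly when `≾`
is contained in the preorder induced by `a`. So AUC is strictly `R*`-proper as soon as `a` and
the marginal means `E_P[Y]` induce the same preorder. Under the latent-variable assumption both
vectors are sums over `z` of the unnormalised conditional vectors `E[Y; Z = z]` and
`E[α(Y); Z = z]`, all of which induce one common preorder (off a null set, where they vanish),
and a sum of such vectors induces that preorder as well.
-/

open scoped BigOperators

/-- A total preorder on `Fin n`: reflexive, transitive and total. -/
structure TotalPreorder (n : ℕ) where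
  rel : Fin n → Fin n → Bool
  refl : ∀ i, rel i i = true
  trans : ∀ i j k, rel i j = true → rel j k = true → rel i k = true
  total : ∀ i j, rel i j = true ∨ rel j i = true

namespace TotalPreorder

/-- The rank vector `ρ_i(≾) = Σ_j (1_{j ≾ i} − 1_{j ≿ i})`. -/
def rho {n : ℕ} (p : TotalPreorder n) (i : Fin n) : ℝ :=
  ∑ j, ((if p.rel j i then (1 : ℝ) else 0) - (if p.rel i j then (1 : ℝ) else 0))

/-- The total preorder induced by a vector `v`: `i ≾ j ↔ v i ≤ v j`. -/
noncomputable def induced {n : ℕ} (v : Fin n → ℝ) : TotalPreorder n where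
  rel i j := decide (v i ≤ v j)
  refl i := by simp
  trans i j k := by
    simp only [decide_eq_true_eq]
    exact le_trans
  total i j := by
    simp only [decide_eq_true_eq]
    exact le_total _ _

/-- `p` is contained in `q` if `i ≾_p j` implies `i ≾_q j`. -/
def contained {n : ℕ} (p q : TotalPreorder n) : Prop :=
  ∀ i j, p.rel i j = true → q.rel i j = true

end TotalPreorder

open TotalPreorder

/-- Expectation of a real-valued function of a binary random vector. -/
noncomputable def pexp {n : ℕ} (P : PMF (Fin n → Bool)) (f : (Fin n → Bool) → ℝ) : ℝ :=
  ∑ y : Fin n → Bool, (P y).toReal * f y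

/-- The marginal functional: `M(P)_i = P[Y_i = 1]`. -/
noncomputable def margin {n : ℕ} (P : PMF (Fin n → Bool)) (i : Fin n) : ℝ :=
  pexp P (fun y => if y i then 1 else 0)

/-- Membership in the weak rank functional `R*(P)`: a total preorder contained in
the preorder induced by the marginal means. -/
def RstarMem {n : ℕ} (P : PMF (Fin n → Bool)) (p : TotalPreorder n) : Prop :=
  p.contained (TotalPreorder.induced (margin P))

/-- Number of positive outcomes. -/
def n1 {n : ℕ} (y : Fin n → Bool) : ℕ := ∑ i, if y i then 1 else 0

/-- Number of negative outcomes. -/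
def n0 {n : ℕ} (y : Fin n → Bool) : ℕ := n - n1 y

/-- AUC weights `α_i(y)`. -/
noncomputable def alpha {n : ℕ} (y : Fin n → Bool) (i : Fin n) : ℝ :=
  if 0 < n1 y ∧ n1 y < n then (if y i then 1 else 0) / ((n0 y : ℝ) * (n1 y : ℝ)) else 0

/-- The empirical area under the ROC curve. -/
noncomputable def AUC {n : ℕ} (y : Fin n → Bool) (p : TotalPreorder n) : ℝ :=
  1 / 2 + 1 / 2 * ∑ i, alpha y i * rho p i

/-- `s` is an `R*`-proper scoring function for the family `F`. -/
def RStarProper {n : ℕ} (s : (Fin n → Bool) → TotalPreorder n → ℝ)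
    (F : Set (PMF (Fin n → Bool))) : Prop :=
  ∀ P ∈ F, ∀ p t : TotalPreorder n, RstarMem P t →
    pexp P (fun y => s y p) ≤ pexp P (fun y => s y t)

/-- `s` is a strictly `R*`-proper scoring function for the family `F`. -/
def StrictlyRStarProper {n : ℕ} (s : (Fin n → Bool) → TotalPreorder n → ℝ)
    (F : Set (PMF (Fin n → Bool))) : Prop :=
  ∀ P ∈ F, ∀ p t : TotalPreorder n, RstarMem P t →
    pexp P (fun y => s y p) ≤ pexp P (fun y => s y t) ∧
      (pexp P (fun y => s y p) = pexp P (fun y => s y t) ↔ RstarMem P p)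

open Finset

theorem ite_le_max_zero {α : Type*} [LinearOrder α] [Zero α] (b : Prop) [Decidable b] (x : α) :
    (if b then x else 0) ≤ max x 0 := by
  split_ifs
  · exact le_max_left x 0
  · exact le_max_right x 0

theorem ite_eq_max_zero_iff {α : Type*} [LinearOrder α] [Zero α] (b : Prop) [Decidable b]
    (x : α) : (if b then x else 0) = max x 0 ↔ (b → 0 ≤ x) ∧ (0 < x → b) := by
  by_cases hb : b
  · simp [hb, eq_comm (a := x)]
  · simp [hb, eq_comm (a := (0 : α))]

theorem sum_le_sum_iff_of_forall_le_iff {ι M : Type*} [Fintype ι] [AddCommMonoid M]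
    [LinearOrder M] [IsOrderedCancelAddMonoid M] {S : Set ι} {u v : ι → M} {z₀ : ι}
    (hoff : ∀ z ∉ S, u z = v z) (hS : ∀ z ∈ S, (u z ≤ v z ↔ u z₀ ≤ v z₀)) :
    ∑ z, u z ≤ ∑ z, v z ↔ u z₀ ≤ v z₀ := by
  by_cases h : u z₀ ≤ v z₀
  · refine iff_of_true (sum_le_sum fun z _ => ?_) h
    by_cases hz : z ∈ S
    · exact (hS z hz).2 h
    · exact (hoff z hz).le
  · refine iff_of_false (not_le.2 <| sum_lt_sum (fun z _ => ?_) ⟨z₀, mem_univ _, not_le.1 h⟩) h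
    by_cases hz : z ∈ S
    · exact le_of_not_ge fun h' => h ((hS z hz).1 h')
    · exact (hoff z hz).ge

theorem PMF.sum_toReal_eq_one {α : Type*} [Fintype α] (P : PMF α) : ∑ a, (P a).toReal = 1 := by
  rw [← ENNReal.toReal_sum fun a _ => P.apply_ne_top a, ← tsum_fintype (L := .unconditional α),
    P.tsum_coe, ENNReal.toReal_one]

theorem PMF.map_fst_apply {α β : Type*} [Fintype β] (Q : PMF (α × β)) (a : α) :
    Q.map Prod.fst a = ∑ b, Q (a, b) := by
  rw [PMF.map_apply, ENNReal.tsum_prod', tsum_eq_single a fun a' h => by simp [Ne.symm h]]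
  simp only [if_true, tsum_fintype]

namespace TotalPreorder

variable {n : ℕ}

theorem contained_induced_iff_of_le_iff {v w : Fin n → ℝ} (h : ∀ i j, v i ≤ v j ↔ w i ≤ w j)
    (p : TotalPreorder n) : p.contained (induced v) ↔ p.contained (induced w) := by
  simp only [contained, induced, decide_eq_true_eq, h]

theorem sum_mul_rho (a : Fin n → ℝ) (p : TotalPreorder n) :
    ∑ i, a i * p.rho i = ∑ i, ∑ j, if p.rel j i then a i - a j else 0 := by
  simp only [rho, mul_sum, mul_sub, mul_ite, mul_one, mul_zero, sum_sub_distrib]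
  rw [sum_comm (f := fun i j => if p.rel i j = true then a i else 0), ← sum_sub_distrib]
  refine sum_congr rfl fun i _ => ?_
  rw [← sum_sub_distrib]
  refine sum_congr rfl fun j _ => ?_
  split_ifs <;> simp

theorem sum_mul_rho_le (a : Fin n → ℝ) (p : TotalPreorder n) :
    ∑ i, a i * p.rho i ≤ ∑ i, ∑ j, max (a i - a j) 0 := by
  rw [sum_mul_rho]
  gcongr with i _ j _
  exact ite_le_max_zero _ _

theorem sum_mul_rho_eq_iff (a : Fin n → ℝ) (p : TotalPreorder n) :
    ∑ i, a i * p.rho i = ∑ i, ∑ j, max (a i - a j) 0 ↔ p.contained (induced a) := by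
  rw [sum_mul_rho, ← Fintype.sum_prod_type', ← Fintype.sum_prod_type',
    sum_eq_sum_iff_of_le fun _ _ => ite_le_max_zero _ _]
  simp only [mem_univ, true_implies, Prod.forall, ite_eq_max_zero_iff, sub_nonneg, sub_pos,
    contained, induced, decide_eq_true_eq]
  refine ⟨fun h i j hij => (h j i).1 hij, fun h i j => ⟨h j i, fun hlt => ?_⟩⟩
  exact (p.total j i).resolve_right fun hij => (h i j hij).not_gt hlt

end TotalPreorder

section AUC

variable {n : ℕ}

theorem pexp_AUC (P : PMF (Fin n → Bool)) (p : TotalPreorder n) :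
    pexp P (fun y => AUC y p) = 1 / 2 + 1 / 2 * ∑ i, pexp P (fun y => alpha y i) * p.rho i := by
  simp only [pexp, AUC, mul_add, sum_add_distrib, ← sum_mul, P.sum_toReal_eq_one, one_mul,
    mul_sum]
  rw [sum_comm]
  refine congrArg _ (sum_congr rfl fun i _ => ?_)
  simp only [sum_mul, mul_sum]
  exact sum_congr rfl fun y _ => by ring

theorem strictlyRStarProper_AUC_of_margin_le_iff (F : Set (PMF (Fin n → Bool)))
    (hF : ∀ P ∈ F, ∀ i j, margin P i ≤ margin P j ↔
      pexp P (fun y => alpha y i) ≤ pexp P (fun y => alpha y j)) :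
    StrictlyRStarProper (fun y p => AUC y p) F := by
  intro P hP p t ht
  set a : Fin n → ℝ := fun i => pexp P (fun y => alpha y i)
  have hR (s : TotalPreorder n) : RstarMem P s ↔ s.contained (induced a) :=
    contained_induced_iff_of_le_iff (hF P hP) s
  have ht_max := (sum_mul_rho_eq_iff a t).2 ((hR t).1 ht)
  simp only [pexp_AUC, hR p, ← sum_mul_rho_eq_iff a p]
  have hp_le := sum_mul_rho_le a p
  exact ⟨by linarith, ⟨fun h => by linarith, fun h => by linarith⟩⟩

end AUC

section latent

variable {n : ℕ} {Z : Type*}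

noncomputable def latentMass (Q : PMF ((Fin n → Bool) × Z)) (z : Z) : ℝ :=
  ∑ y, (Q (y, z)).toReal

noncomputable def latentExp (Q : PMF ((Fin n → Bool) × Z)) (z : Z) (f : (Fin n → Bool) → ℝ) :
    ℝ :=
  ∑ y, (Q (y, z)).toReal * f y

/-- `E_Q[f(Y) | Z = z]`, which is junk (`0`) when `latentMass Q z = 0`. -/
noncomputable def latentCondExp (Q : PMF ((Fin n → Bool) × Z)) (z : Z)
    (f : (Fin n → Bool) → ℝ) : ℝ :=
  latentExp Q z f / latentMass Q z

theorem exists_latentMass_ne_zero [Fintype Z] (Q : PMF ((Fin n → Bool) × Z)) :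
    ∃ z, latentMass Q z ≠ 0 := by
  by_contra! h
  have hsum := Q.sum_toReal_eq_one
  rw [Fintype.sum_prod_type_right] at hsum
  exact one_ne_zero (hsum.symm.trans (sum_eq_zero fun z _ => h z))

theorem latentExp_eq_zero {Q : PMF ((Fin n → Bool) × Z)} {z : Z} (hz : latentMass Q z = 0)
    (f : (Fin n → Bool) → ℝ) : latentExp Q z f = 0 := by
  have hQ := (sum_eq_zero_iff_of_nonneg fun y _ => ENNReal.toReal_nonneg).1 hz
  exact sum_eq_zero fun y hy => by rw [hQ y hy, zero_mul]

theorem latentCondExp_le_latentCondExp_iff {Q : PMF ((Fin n → Bool) × Z)} {z : Z}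
    (hz : latentMass Q z ≠ 0) {f g : (Fin n → Bool) → ℝ} :
    latentCondExp Q z f ≤ latentCondExp Q z g ↔ latentExp Q z f ≤ latentExp Q z g :=
  div_le_div_iff_of_pos_right <|
    (sum_nonneg fun _ _ => ENNReal.toReal_nonneg).lt_of_ne' hz

theorem pexp_map_fst [Fintype Z] (Q : PMF ((Fin n → Bool) × Z)) (f : (Fin n → Bool) → ℝ) :
    pexp (Q.map Prod.fst) f = ∑ z, latentExp Q z f := by
  simp only [pexp, latentExp, PMF.map_fst_apply,
    ENNReal.toReal_sum fun _ _ => PMF.apply_ne_top _ _, sum_mul]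
  exact sum_comm

theorem pexp_map_fst_le_iff [Fintype Z] {Q : PMF ((Fin n → Bool) × Z)}
    {f g : (Fin n → Bool) → ℝ} {z₀ : Z} (hz₀ : latentMass Q z₀ ≠ 0)
    (h : ∀ z, latentMass Q z ≠ 0 →
      (latentCondExp Q z f ≤ latentCondExp Q z g ↔
        latentCondExp Q z₀ f ≤ latentCondExp Q z₀ g)) :
    pexp (Q.map Prod.fst) f ≤ pexp (Q.map Prod.fst) g ↔
      latentCondExp Q z₀ f ≤ latentCondExp Q z₀ g := by
  rw [pexp_map_fst, pexp_map_fst, latentCondExp_le_latentCondExp_iff hz₀]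
  refine sum_le_sum_iff_of_forall_le_iff (S := {z | latentMass Q z ≠ 0}) (fun z hz => ?_)
    fun z hz => ?_
  · rw [latentExp_eq_zero (not_not.1 hz), latentExp_eq_zero (not_not.1 hz)]
  · rw [← latentCondExp_le_latentCondExp_iff hz, ← latentCondExp_le_latentCondExp_iff hz₀]
    exact h z hz

theorem margin_map_fst_le_iff_of_latent [Fintype Z] (Q : PMF ((Fin n → Bool) × Z))
    (hα : ∀ z, latentMass Q z ≠ 0 → ∀ i j : Fin n,
      (latentCondExp Q z (fun y => if y i then 1 else 0) ≤
          latentCondExp Q z (fun y => if y j then 1 else 0) ↔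
        latentCondExp Q z (fun y => alpha y i) ≤ latentCondExp Q z (fun y => alpha y j)))
    (hconst : ∀ z z', latentMass Q z ≠ 0 → latentMass Q z' ≠ 0 → ∀ i j : Fin n,
      (latentCondExp Q z (fun y => if y i then 1 else 0) ≤
          latentCondExp Q z (fun y => if y j then 1 else 0) ↔
        latentCondExp Q z' (fun y => if y i then 1 else 0) ≤
          latentCondExp Q z' (fun y => if y j then 1 else 0)))
    (i j : Fin n) :
    margin (Q.map Prod.fst) i ≤ margin (Q.map Prod.fst) j ↔
      pexp (Q.map Prod.fst) (fun y => alpha y i) ≤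
        pexp (Q.map Prod.fst) (fun y => alpha y j) := by
  obtain ⟨z₀, hz₀⟩ := exists_latentMass_ne_zero Q
  rw [margin, margin, pexp_map_fst_le_iff hz₀ fun z hz => hconst z z₀ hz hz₀ i j,
    pexp_map_fst_le_iff hz₀ fun z hz =>
      (hα z hz i j).symm.trans ((hconst z z₀ hz hz₀ i j).trans (hα z₀ hz₀ i j)),
    hα z₀ hz₀ i j]

end latent

/-- AUC is strictly `R*`-proper for distributions admitting a latent
variable `Z` such that (i) `E[Y | Z]` and `E[α(Y) | Z]` induce the same preorder for
almost all `Z`, and (ii) this preorder is the same for almost all `Z`. -/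
theorem auc_strictly_Rstar_proper_of_latent
    {n : ℕ} {Z : Type*} [Fintype Z]
    (F : Set (PMF ((Fin n → Bool) × Z)))
    (hF : ∀ Q ∈ F,
      let pz : Z → ℝ := fun z => ∑ y : Fin n → Bool, (Q (y, z)).toReal
      let condE : Z → ((Fin n → Bool) → ℝ) → ℝ := fun z f =>
        (∑ y : Fin n → Bool, (Q (y, z)).toReal * f y) / pz z
      (∀ z, pz z ≠ 0 → ∀ i j : Fin n,
        (condE z (fun y => if y i then 1 else 0) ≤ condE z (fun y => if y j then 1 else 0) ↔
          condE z (fun y => alpha y i) ≤ condE z (fun y => alpha y j))) ∧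
      (∀ z z', pz z ≠ 0 → pz z' ≠ 0 → ∀ i j : Fin n,
        (condE z (fun y => if y i then 1 else 0) ≤ condE z (fun y => if y j then 1 else 0) ↔
          condE z' (fun y => if y i then 1 else 0) ≤
            condE z' (fun y => if y j then 1 else 0)))) :
    StrictlyRStarProper (fun y p => AUC y p) ((fun Q => Q.map Prod.fst) '' F) := by
  refine strictlyRStarProper_AUC_of_margin_le_iff _ ?_
  rintro _ ⟨Q, hQ, rfl⟩
  exact margin_map_fst_le_iff_of_latent Q (hF Q hQ).1 (hF Q hQ).2
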